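/- Under the PMTA-to-WCFG transformation (as above), the value computed by the PMTA equals the weight computed by the grammar on every tree: W(t) = A(t) = λ·μ(t) for every tree t over the ranked alphabet Σ. -/

import Mathlib

/-- Skeletal trees over a set `Sig0` of terminal (leaf) symbols: internal
nodes carry the placeholder `?`. -/
inductive Sk (Sig0 : Type) : Type
  | leaf : Sig0 → Sk Sig0
  | node : List (Sk Sig0) → Sk Sig0

/-- Bottom-up evaluation of a skeletal tree by a multiplicity tree automaton
of dimension `d` whose transitions are given by leaf vectors `μleaf` and by
the coefficients `coef i (i₁,…,i_k)` of the multilinear maps `μ_?`. -/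
noncomputable def Sk.eval {Sig0 : Type} {d : ℕ}
    (μleaf : Sig0 → Fin d → ℝ) (coef : Fin d → List (Fin d) → ℝ) :
    Sk Sig0 → Fin d → ℝ
  | .leaf a => μleaf a
  | .node ts => fun i =>
      ∑ g : Fin ts.length → Fin d,
        coef i (List.ofFn g) *
          ∏ j : Fin ts.length, Sk.eval μleaf coef (ts.get j) (g j)
decreasing_by
  have hm : ts.get j ∈ ts := by simp
  have := List.sizeOf_lt_of_mem hm
  simp only [Sk.node.sizeOf_spec]
  omega

/-- Derivation trees of the weighted grammar extracted from a PMTA: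
`term i σ` stands for an application of the rule `V_i → σ`, and
`node i ts` for an application of the rule `V_i → V_{i₁} ⋯ V_{i_k}`. -/
inductive DT (Sig0 : Type) (d : ℕ) : Type
  | term : Fin d → Sig0 → DT Sig0 d
  | node : Fin d → List (DT Sig0 d) → DT Sig0 d

namespace DT

/-- The non-terminal `V_i` labeling the root. -/
def rootIdx {Sig0 : Type} {d : ℕ} : DT Sig0 d → Fin d
  | .term i _ => i
  | .node i _ => i

/-- The weight of a derivation tree in the extracted grammar:
`θ(V_i → σ) = μ_σ[i]` and `θ(V_i → V_{i₁}⋯V_{i_k}) = c^i_{i₁,…,i_k}`. -/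
def wt {Sig0 : Type} {d : ℕ}
    (μleaf : Sig0 → Fin d → ℝ) (coef : Fin d → List (Fin d) → ℝ) :
    DT Sig0 d → ℝ
  | .term i a => μleaf a i
  | .node i ts =>
      coef i (ts.map rootIdx) * (ts.attach.map (fun x => wt μleaf coef x.1)).prod
decreasing_by
  have := List.sizeOf_lt_of_mem x.2
  simp only [DT.node.sizeOf_spec]
  omega

/-- The skeletal form of a derivation tree. -/
def skel {Sig0 : Type} {d : ℕ} : DT Sig0 d → Sk Sig0
  | .term _ a => .leaf a
  | .node _ ts => .node (ts.attach.map (fun x => skel x.1))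
decreasing_by
  have := List.sizeOf_lt_of_mem x.2
  simp only [DT.node.sizeOf_spec]
  omega

/-- `Wnt μleaf coef i s` : the total weight of all derivation trees rooted
at the non-terminal `V_i` whose skeletal form is `s`. -/
noncomputable def Wnt {Sig0 : Type} {d : ℕ}
    (μleaf : Sig0 → Fin d → ℝ) (coef : Fin d → List (Fin d) → ℝ)
    (i : Fin d) (s : Sk Sig0) : ℝ :=
  ∑' dt : {dt : DT Sig0 d // rootIdx dt = i ∧ skel dt = s},
    wt μleaf coef (dt : DT Sig0 d)

end DT

/-- The weight the extracted grammar assigns to a skeletal tree `t`: the sum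
over all derivation trees with skeletal form `t` of the weight of the rule
`S → V_root` (which is `λ[root]`) times the weight of the tree. -/
noncomputable def Wgrammar {Sig0 : Type} {d : ℕ}
    (μleaf : Sig0 → Fin d → ℝ) (coef : Fin d → List (Fin d) → ℝ)
    (lam : Fin d → ℝ) (t : Sk Sig0) : ℝ :=
  ∑' dt : {dt : DT Sig0 d // DT.skel dt = t},
    lam (DT.rootIdx (dt : DT Sig0 d)) * DT.wt μleaf coef (dt : DT Sig0 d)

/-!
A derivation tree from `V_i` with skeletal form `?(t₁, …, t_k)` is exactly a choice of
non-terminals `i₁, …, i_k` for the children together with derivation trees from the `V_{i_j}`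
with skeletal forms `t_j`, and its weight is `c^i_{i₁,…,i_k}` times the product of theirs.
There are finitely many such trees, and summing their weights distributes over the product,
which is the multilinear transition of the automaton. Hence by induction on `t` the total
weight `Wnt i t` of the derivations from `V_i` is `μ(t)[i]`, and the rule `S → V_i` contributes
the factor `λ[i]`.
-/

theorem Sk.induction {Sig0 : Type} {motive : Sk Sig0 → Prop}
    (leaf : ∀ a, motive (.leaf a))
    (node : ∀ ts, (∀ t ∈ ts, motive t) → motive (.node ts)) :
    ∀ s, motive s
  | .leaf a => leaf a
  | .node ts => node ts fun t _ => Sk.induction leaf node t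
decreasing_by
  have := List.sizeOf_lt_of_mem ‹t ∈ ts›
  simp only [Sk.node.sizeOf_spec]
  omega

namespace DT

variable {Sig0 : Type} {d : ℕ}

@[simp]
theorem skel_node (i : Fin d) (cs : List (DT Sig0 d)) :
    skel (node i cs) = .node (cs.map skel) := by
  rw [skel, List.attach_map_val]

@[simp]
theorem wt_node (μleaf : Sig0 → Fin d → ℝ) (coef : Fin d → List (Fin d) → ℝ)
    (i : Fin d) (cs : List (DT Sig0 d)) :
    wt μleaf coef (node i cs) = coef i (cs.map rootIdx) * (cs.map (wt μleaf coef)).prod := by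
  rw [wt, List.attach_map_val]

abbrev Fiber (i : Fin d) (s : Sk Sig0) : Type :=
  {dt : DT Sig0 d // rootIdx dt = i ∧ skel dt = s}

theorem Fiber.val_eq_term {i : Fin d} {a : Sig0} (x : Fiber i (.leaf a)) : x.1 = term i a := by
  obtain ⟨_ | _, rfl, hskel⟩ := x
  · rw [skel, Sk.leaf.injEq] at hskel
    subst hskel
    rfl
  · simp at hskel

instance {i : Fin d} {a : Sig0} : Subsingleton (Fiber i (.leaf a)) :=
  ⟨fun x y => Subtype.ext (x.val_eq_term.trans y.val_eq_term.symm)⟩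

def Fiber.ofChildren (i : Fin d) (ts : List (Sk Sig0))
    (p : Σ g : Fin ts.length → Fin d, ∀ j, Fiber (g j) (ts.get j)) : Fiber i (.node ts) :=
  ⟨node i (List.ofFn fun j => (p.2 j).1), rfl, by
    simp [List.map_ofFn, Function.comp_def, (p.2 _).2.2]⟩

theorem Fiber.ofChildren_bijective (i : Fin d) (ts : List (Sk Sig0)) :
    Function.Bijective (Fiber.ofChildren i ts) := by
  refine ⟨fun ⟨g, f⟩ ⟨g', f'⟩ h => ?_, fun ⟨dt, hroot, hskel⟩ => ?_⟩
  · have hval : ∀ j, (f j).1 = (f' j).1 :=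
      congrFun (List.ofFn_injective (node.inj (congrArg Subtype.val h)).2)
    obtain rfl : g = g' := funext fun j => by rw [← (f j).2.1, ← (f' j).2.1, hval]
    exact Sigma.ext rfl (heq_of_eq (funext fun j => Subtype.ext (hval j)))
  · cases dt with
    | term => simp [skel] at hskel
    | node i' cs =>
      obtain rfl : i' = i := hroot
      obtain rfl : cs.map skel = ts := by simpa using hskel
      have hlen : (cs.map skel).length = cs.length := List.length_map _
      refine ⟨⟨fun j => rootIdx (cs.get (j.cast hlen)),
        fun j => ⟨cs.get (j.cast hlen), rfl, by simp⟩⟩, Subtype.ext ?_⟩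
      simp [Fiber.ofChildren]

theorem finite_fiber (i : Fin d) (s : Sk Sig0) : Finite (Fiber i s) := by
  induction s using Sk.induction generalizing i with
  | leaf a => infer_instance
  | node ts ih =>
    have := fun j k => ih (ts.get j) (List.get_mem ts j) k
    exact Finite.of_surjective _ (Fiber.ofChildren_bijective i ts).2

noncomputable instance (i : Fin d) (s : Sk Sig0) : Fintype (Fiber i s) :=
  have := finite_fiber i s
  Fintype.ofFinite _

theorem sum_wt_fiber (μleaf : Sig0 → Fin d → ℝ) (coef : Fin d → List (Fin d) → ℝ)
    (i : Fin d) (s : Sk Sig0) :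
    ∑ x : Fiber i s, wt μleaf coef x.1 = s.eval μleaf coef i := by
  induction s using Sk.induction generalizing i with
  | leaf a =>
    rw [Fintype.sum_subsingleton _ ⟨term i a, rfl, by rw [skel]⟩, wt, Sk.eval]
  | node ts ih =>
    rw [← (Fiber.ofChildren_bijective i ts).sum_comp, Fintype.sum_sigma, Sk.eval]
    refine Finset.sum_congr rfl fun g _ => ?_
    calc ∑ f : ∀ j, Fiber (g j) (ts.get j), wt μleaf coef (Fiber.ofChildren i ts ⟨g, f⟩).1
        = coef i (List.ofFn g) *
            ∑ f : ∀ j, Fiber (g j) (ts.get j), ∏ j, wt μleaf coef (f j).1 := by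
          rw [Finset.mul_sum]
          refine Fintype.sum_congr _ _ fun f => ?_
          have hroot : (fun j => rootIdx (f j).1) = g := funext fun j => (f j).2.1
          simp only [Fiber.ofChildren, wt_node, List.map_ofFn, Function.comp_def, hroot,
            List.prod_ofFn]
      _ = coef i (List.ofFn g) * ∏ j, (ts.get j).eval μleaf coef (g j) := by
          rw [← Fintype.prod_sum fun j (x : Fiber (g j) (ts.get j)) => wt μleaf coef x.1]
          exact congrArg _ (Fintype.prod_congr _ _ fun j => ih _ (List.get_mem ts j) (g j))

theorem Wnt_eq_eval (μleaf : Sig0 → Fin d → ℝ) (coef : Fin d → List (Fin d) → ℝ)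
    (i : Fin d) (s : Sk Sig0) : Wnt μleaf coef i s = s.eval μleaf coef i :=
  (tsum_fintype _).trans (sum_wt_fiber μleaf coef i s)

def sigmaFiberEquiv (t : Sk Sig0) :
    (Σ i : Fin d, Fiber i t) ≃ {dt : DT Sig0 d // skel dt = t} where
  toFun p := ⟨p.2.1, p.2.2.2⟩
  invFun dt := ⟨rootIdx dt.1, dt.1, rfl, dt.2⟩
  left_inv := fun ⟨_, _, rfl, _⟩ => rfl
  right_inv _ := rfl

end DT

theorem Wgrammar_eq_sum_Wnt {Sig0 : Type} {d : ℕ}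
    (μleaf : Sig0 → Fin d → ℝ) (coef : Fin d → List (Fin d) → ℝ) (lam : Fin d → ℝ)
    (t : Sk Sig0) :
    Wgrammar μleaf coef lam t = ∑ i, lam i * DT.Wnt μleaf coef i t := by
  rw [Wgrammar, ← (DT.sigmaFiberEquiv t).tsum_eq, tsum_fintype, Fintype.sum_sigma]
  refine Fintype.sum_congr _ _ fun i => ?_
  rw [DT.Wnt, tsum_fintype, Finset.mul_sum]
  exact Fintype.sum_congr _ _ fun x => congrArg (lam · * _) x.2.1

theorem stmt_12_general {Sig0 : Type} {d : ℕ}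
    (μleaf : Sig0 → Fin d → ℝ) (coef : Fin d → List (Fin d) → ℝ)
    (lam : Fin d → ℝ) :
    -- the grammar weight of every tree equals the automaton value λ·μ(t)
    ∀ t : Sk Sig0,
      Wgrammar μleaf coef lam t = ∑ i, lam i * Sk.eval μleaf coef t i := by
  intro t
  simp only [Wgrammar_eq_sum_Wnt, DT.Wnt_eq_eval]

theorem stmt_12 {Sig0 : Type} {d : ℕ}
    (μleaf : Sig0 → Fin d → ℝ) (coef : Fin d → List (Fin d) → ℝ)
    (lam : Fin d → ℝ)
    -- the automaton is a PMTA: all weights are nonnegative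
    (hleaf : ∀ a i, 0 ≤ μleaf a i)
    (hcoef : ∀ i l, 0 ≤ coef i l)
    (hlam : ∀ i, 0 ≤ lam i) :
    -- the grammar weight of every tree equals the automaton value λ·μ(t)
    ∀ t : Sk Sig0,
      Wgrammar μleaf coef lam t = ∑ i, lam i * Sk.eval μleaf coef t i :=
  stmt_12_general μleaf coef lam
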